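/- For $0 < \epsilon \le p \le 1-\epsilon < 1$ and $g \in \{0,1\}$, the negative Bernoulli log-likelihood satisfies $\frac{-\log(1-\epsilon)}{\epsilon}\,|g-p| \le -\log(p^g (1-p)^{1-g}) \le \frac{-\log(\epsilon)}{1-\epsilon}\,|g-p|$. -/
import Mathlib

lemma key_bd (ε t : ℝ) (hε : 0 < ε) (h1 : ε ≤ t) (h2 : t ≤ 1 - ε) :
    (-Real.log (1 - ε)) / ε * t ≤ -Real.log (1 - t) ∧
      -Real.log (1 - t) ≤ (-Real.log ε) / (1 - ε) * t := by
  have ht : 0 < t := lt_of_lt_of_le hε h1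
  have h1e : 0 < 1 - ε := lt_of_lt_of_le hε (h1.trans h2)
  have h1t : 0 < 1 - t := by linarith
  have hε1 : ε < 1 := by linarith
  constructor
  · -- (1-ε)^(t/ε) ≥ 1 - t
    have hb := one_add_mul_self_le_rpow_one_add (s := -ε) (by linarith)
      (p := t / ε) ((one_le_div hε).2 h1)
    have hb' : 1 - t ≤ (1 - ε) ^ (t / ε) := by
      have e : t / ε * -ε = -t := by field_simp
      rw [e, show (1:ℝ) + -ε = 1 - ε from by ring, show (1:ℝ) + -t = 1 - t from by ring] at hb
      exact hb
    have hlog : Real.log (1 - t) ≤ (t / ε) * Real.log (1 - ε) := by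
      have := Real.log_le_log h1t hb'
      rwa [Real.log_rpow h1e] at this
    have e : (-Real.log (1 - ε)) / ε * t = -(t / ε * Real.log (1 - ε)) := by ring
    linarith
  · -- ε^(t/(1-ε)) ≤ 1 - t
    have hb := rpow_one_add_le_one_add_mul_self (s := ε - 1) (by linarith)
      (p := t / (1 - ε)) (by positivity) ((div_le_one h1e).2 h2)
    have hb' : ε ^ (t / (1 - ε)) ≤ 1 - t := by
      have e1 : (1 : ℝ) + (ε - 1) = ε := by ring
      have e2 : 1 + t / (1 - ε) * (ε - 1) = 1 - t := by field_simp; ring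
      rwa [e1, e2] at hb
    have hlog : (t / (1 - ε)) * Real.log ε ≤ Real.log (1 - t) := by
      have := Real.log_le_log (Real.rpow_pos_of_pos hε _) hb'
      rwa [Real.log_rpow hε] at this
    have e : (-Real.log ε) / (1 - ε) * t = -(t / (1 - ε) * Real.log ε) := by ring
    linarith

theorem stmt_0 (ε p g : ℝ) (hε : 0 < ε) (h1 : ε ≤ p) (h2 : p ≤ 1 - ε)
    (h3 : 1 - ε < 1) (hg : g = 0 ∨ g = 1) :
    (-Real.log (1 - ε)) / ε * |g - p| ≤ -Real.log (p ^ g * (1 - p) ^ (1 - g)) ∧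
      -Real.log (p ^ g * (1 - p) ^ (1 - g)) ≤ (-Real.log ε) / (1 - ε) * |g - p| := by
  have hp : 0 < p := lt_of_lt_of_le hε h1
  rcases hg with rfl | rfl
  · simp only [Real.rpow_zero, sub_zero, Real.rpow_one, one_mul, zero_sub, abs_neg,
      abs_of_pos hp]
    exact key_bd ε p hε h1 h2
  · simp only [Real.rpow_one, sub_self, Real.rpow_zero, mul_one]
    have habs : |1 - p| = 1 - p := abs_of_nonneg (by linarith)
    rw [habs]
    have := key_bd ε (1 - p) hε (by linarith) (by linarith)
    simpa using this
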